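/- arXiv:2512.16500 — 4 statements merged into one kernel-verified Lean document; each statement's English description precedes it below -/
import Mathlib

section
/- Let I be a finite set and A a finite nonempty index set. In the A-fold tensor power of the free abelian group ℤ[𝒫(I)] on the powerset of I, the identity holds: ∑_{J ⊆ I} (-1)^{|I|-|J|} ⊗_{a∈A} ⟨J⟩ = ∑_{k ∈ ℛ(A,I)} ⊗_{a∈A} ( ∑_{J ⊆ k(a)} (-1)^{|k(a)|-|J|} ⟨J⟩ ), where ℛ(A,I) is the set of functions k : A → 𝒫(I) with ⋃_{a∈A} k(a) = I. -/
open PiTensorProduct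

open Finset

private lemma aux1 {α : Type*} [DecidableEq α] (V T : Finset α) (h : V ⊆ T) :
    ∑ U ∈ T.powerset.filter (fun U => V ⊆ U), (-1:ℤ)^(U.card - V.card)
      = if T = V then 1 else 0 := by
  have key : (∑ m ∈ (T \ V).powerset, (-1:ℤ) ^ m.card) = if T = V then 1 else 0 := by
    rw [Finset.sum_powerset_neg_one_pow_card]
    by_cases hh : T = V
    · simp [hh]
    · rw [if_neg hh, if_neg]
      intro hc
      exact hh (subset_antisymm (sdiff_eq_empty_iff_subset.1 hc) h)
  rw [← key]
  refine Finset.sum_nbij' (fun U => U \ V) (fun K => V ∪ K) ?_ ?_ ?_ ?_ ?_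
  · intro U hU
    simp only [mem_filter, mem_powerset] at hU
    exact mem_powerset.2 (sdiff_subset_sdiff hU.1 (Finset.Subset.refl V))
  · intro K hK
    simp only [mem_powerset] at hK
    refine mem_filter.2 ⟨mem_powerset.2 (union_subset h (hK.trans sdiff_subset)), subset_union_left⟩
  · intro U hU
    simp only [mem_filter, mem_powerset] at hU
    exact union_sdiff_of_subset hU.2
  · intro K hK
    simp only [mem_powerset] at hK
    exact union_sdiff_cancel_left (disjoint_sdiff.mono_right hK)
  · intro U hU
    simp only [mem_filter, mem_powerset] at hU
    congr 1
    exact (card_sdiff_of_subset hU.2).symm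

private lemma aux2 {α : Type*} [DecidableEq α] (V T : Finset α) (h : V ⊆ T) :
    ∑ U ∈ T.powerset.filter (fun U => V ⊆ U), (-1:ℤ)^(T.card - U.card)
      = if T = V then 1 else 0 := by
  have step : ∑ U ∈ T.powerset.filter (fun U => V ⊆ U), (-1:ℤ)^(T.card - U.card)
      = (-1:ℤ)^(T.card - V.card) *
        ∑ U ∈ T.powerset.filter (fun U => V ⊆ U), (-1:ℤ)^(U.card - V.card) := by
    rw [Finset.mul_sum]
    refine Finset.sum_congr rfl fun U hU => ?_
    simp only [mem_filter, mem_powerset] at hU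
    have h2' : T.card - V.card = (T.card - U.card) + (U.card - V.card) := by
      have := card_le_card hU.1; have := card_le_card hU.2; omega
    rw [h2', pow_add, mul_assoc, ← pow_add, ← two_mul, pow_mul]
    norm_num
  rw [step, aux1 V T h]
  split_ifs with hh
  · subst hh; simp
  · ring

private lemma swap_sum {α M : Type*} [DecidableEq α] [AddCommMonoid M] (T : Finset α)
    (f : Finset α → Finset α → M) :
    ∑ S ∈ T.powerset, ∑ J ∈ S.powerset, f S J
      = ∑ J ∈ T.powerset, ∑ S ∈ T.powerset.filter (fun S => J ⊆ S), f S J := by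
  have h1 : ∑ S ∈ T.powerset, ∑ J ∈ S.powerset, f S J
      = ∑ S ∈ T.powerset, ∑ J ∈ T.powerset, if J ⊆ S then f S J else 0 := by
    refine Finset.sum_congr rfl fun S hS => ?_
    rw [mem_powerset] at hS
    rw [← Finset.sum_filter]
    congr 1
    ext J
    simp only [mem_filter, mem_powerset]
    exact ⟨fun h => ⟨h.trans hS, h⟩, fun h => h.2⟩
  rw [h1, Finset.sum_comm]
  refine Finset.sum_congr rfl fun J hJ => ?_
  rw [Finset.sum_filter]

private lemma key1 {α : Type*} [DecidableEq α] (T : Finset α) :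
    ∑ S ∈ T.powerset, ∑ J ∈ S.powerset, (-1:ℤ)^(S.card - J.card) • FreeAbelianGroup.of J
      = FreeAbelianGroup.of T := by
  rw [swap_sum]
  have h2 : ∀ J ∈ T.powerset,
      ∑ S ∈ T.powerset.filter (fun S => J ⊆ S), (-1:ℤ)^(S.card - J.card) • FreeAbelianGroup.of J
        = (if T = J then (1:ℤ) else 0) • FreeAbelianGroup.of J := by
    intro J hJ
    rw [← Finset.sum_smul, aux1 J T (mem_powerset.1 hJ)]
  rw [Finset.sum_congr rfl h2]
  simp only [ite_smul, one_smul, zero_smul]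
  rw [Finset.sum_ite_eq]
  simp

private lemma mobius {α M : Type*} [DecidableEq α] [AddCommMonoid M] [Module ℤ M]
    (f g : Finset α → M) (hfg : ∀ T, g T = ∑ U ∈ T.powerset, f U) (T : Finset α) :
    f T = ∑ U ∈ T.powerset, (-1:ℤ)^(T.card - U.card) • g U := by
  symm
  calc ∑ U ∈ T.powerset, (-1:ℤ)^(T.card - U.card) • g U
      = ∑ U ∈ T.powerset, ∑ V ∈ U.powerset, (-1:ℤ)^(T.card - U.card) • f V := by
        refine Finset.sum_congr rfl fun U hU => ?_
        rw [hfg U, Finset.smul_sum]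
    _ = ∑ V ∈ T.powerset, ∑ U ∈ T.powerset.filter (fun U => V ⊆ U),
          (-1:ℤ)^(T.card - U.card) • f V := swap_sum T _
    _ = ∑ V ∈ T.powerset, (if T = V then (1:ℤ) else 0) • f V := by
        refine Finset.sum_congr rfl fun V hV => ?_
        rw [← Finset.sum_smul, aux2 V T (mem_powerset.1 hV)]
    _ = f T := by
        simp only [ite_smul, one_smul, zero_smul]
        rw [Finset.sum_ite_eq]
        simp

/-- Lemma 15.1: in the `A`-fold tensor power of the free abelian group on the powerset
of a finite set `I`,
`∑_{J ⊆ I} (-1)^{|I|-|J|} ⊗_a ⟨J⟩ = ∑_{k ∈ ℛ(A,I)} ⊗_a ∑_{J ⊆ k(a)} (-1)^{|k(a)|-|J|} ⟨J⟩`,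
where `ℛ(A,I)` is the set of functions `k : A → 𝒫(I)` whose values cover `I`. -/
theorem stmt1 {α A : Type*} [Fintype α] [DecidableEq α] [Fintype A] [DecidableEq A]
    [Nonempty A] :
    (∑ J : Finset α, (-1 : ℤ) ^ (Fintype.card α - J.card) •
        PiTensorProduct.tprod ℤ (fun _ : A => FreeAbelianGroup.of J))
      = ∑ k ∈ Finset.univ.filter
            (fun k : A → Finset α => Finset.univ.biUnion k = Finset.univ),
          PiTensorProduct.tprod ℤ (fun a : A =>
            ∑ J ∈ (k a).powerset,
              (-1 : ℤ) ^ ((k a).card - J.card) • FreeAbelianGroup.of J) := by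
  classical
  have hGH : ∀ T : Finset α,
      PiTensorProduct.tprod ℤ (fun _ : A => FreeAbelianGroup.of T)
        = ∑ U ∈ T.powerset, ∑ k ∈ Finset.univ.filter
            (fun k : A → Finset α => Finset.univ.biUnion k = U),
            PiTensorProduct.tprod ℤ (fun a : A => ∑ J ∈ (k a).powerset,
              (-1:ℤ)^((k a).card - J.card) • FreeAbelianGroup.of J) := by
    intro T
    have e1 : (fun _ : A => FreeAbelianGroup.of T)
        = fun _ : A => ∑ S ∈ T.powerset, ∑ J ∈ S.powerset,
            (-1:ℤ)^(S.card - J.card) • FreeAbelianGroup.of J := by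
      funext a; rw [key1 T]
    rw [e1,
      MultilinearMap.map_sum_finset (PiTensorProduct.tprod ℤ)
        (g := fun (_ : A) (S : Finset α) => ∑ J ∈ S.powerset,
          (-1:ℤ)^(S.card - J.card) • FreeAbelianGroup.of J)
        (A := fun _ : A => T.powerset),
      ← Finset.sum_fiberwise_of_maps_to
        (g := fun k : A → Finset α => Finset.univ.biUnion k) (t := T.powerset)
        (fun k hk => by
          simp only [Fintype.mem_piFinset, Finset.mem_powerset] at hk ⊢
          exact Finset.biUnion_subset.2 fun a _ => hk a)]
    refine Finset.sum_congr rfl fun U hU => Finset.sum_congr ?_ fun _ _ => rfl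
    ext k
    simp only [Finset.mem_filter, Fintype.mem_piFinset, Finset.mem_powerset,
      Finset.mem_univ, true_and]
    constructor
    · rintro ⟨-, h⟩; exact h
    · intro h
      exact ⟨fun a => (Finset.subset_biUnion_of_mem k (Finset.mem_univ a)).trans
        (h ▸ Finset.mem_powerset.1 hU), h⟩
  have final := mobius _ _ hGH Finset.univ
  rw [Finset.powerset_univ, Finset.card_univ] at final
  exact final.symm
end

section
/- Let P be a finite partially ordered set and U : P^op → Ab a functor (presheaf of abelian groups), with restriction maps u ↦ u|_q : U(p) → U(q) for p ≥ q. Then the homomorphism ∇_P : ⊕_{p∈P} U(p) → ⊕_{p∈P} U(p) sending in_p(u) to ∑_{q ≤ p} in_q(u|_q) is an isomorphism. -/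
section StmtAux
variable {P : Type*} [Fintype P] [DecidableEq P] [PartialOrder P]
    [DecidableRel (α := P) (· ≤ ·)] [DecidableRel (α := P) (· < ·)]
    (U : P → Type*) [∀ p, AddCommGroup (U p)]
    (res : ∀ p q : P, q ≤ p → (U p →+ U q))

noncomputable def stmt5Inv (b : ∀ p, U p) : ∀ p, U p :=
  (Finite.to_wellFoundedGT (α := P)).wf.fix
    (fun p ih => b p - ∑ q, if h : p < q then res q p h.le (ih q h) else 0)

theorem stmt5Inv_eq (b : ∀ p, U p) (p : P) :
    stmt5Inv U res b p
      = b p - ∑ q, if h : p < q then res q p h.le (stmt5Inv U res b q) else 0 := by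
  rw [stmt5Inv, WellFounded.fix_eq]

theorem stmt5_key (hres_id : ∀ p, res p p le_rfl = AddMonoidHom.id (U p))
    (x : DirectSum P U) (p : P) :
    (DirectSum.toAddMonoid (fun p : P =>
        ∑ q : {q : P // q ≤ p}, (DirectSum.of U q.1).comp (res p q.1 q.2)) :
          DirectSum P U →+ DirectSum P U) x p
      = x p + ∑ q, if h : p < q then res q p h.le (x q) else 0 := by
  induction x using DirectSum.induction_on with
  | zero => simp
  | of j u =>
    rw [DirectSum.toAddMonoid_of]
    rw [AddMonoidHom.finset_sum_apply, DFinsupp.finset_sum_apply]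
    simp only [AddMonoidHom.comp_apply, DirectSum.of_apply]
    have hsum : (∑ x : P, if h : p < x then (res x p h.le)
          ((if h : j = x then (h ▸ u : U x) else 0 : U x)) else 0)
        = if h : p < j then res j p h.le u else 0 := by
      rw [Finset.sum_eq_single j]
      · split <;> simp
      · intro x _ hxj
        split
        · rw [dif_neg (fun h => hxj h.symm), map_zero]
        · rfl
      · simp
    rw [hsum]
    by_cases hpj : p ≤ j
    · have hmem : (⟨p, hpj⟩ : {q : P // q ≤ j}) ∈ Finset.univ := Finset.mem_univ _
      rw [Finset.sum_eq_single_of_mem _ hmem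
        (fun x _ hx => dif_neg (fun h => hx (Subtype.ext h)))]
      rcases eq_or_lt_of_le hpj with h | h
      · subst h
        simp [hres_id, not_lt_of_ge hpj]
      · rw [dif_pos rfl, dif_neg (ne_of_gt h), dif_pos h]
        simp
    · rw [Finset.sum_eq_zero (fun x _ => dif_neg (fun h => hpj (h.symm.le.trans x.2)))]
      rw [dif_neg (fun h => hpj (le_of_eq h.symm)), dif_neg (fun h => hpj h.le)]
      simp
  | add a b ha hb =>
    simp only [map_add, DirectSum.add_apply, ha, hb]
    rw [add_add_add_comm, ← Finset.sum_add_distrib]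
    congr 1
    refine Finset.sum_congr rfl (fun x _ => ?_)
    split <;> simp

end StmtAux

/-- For a presheaf `U` of abelian groups on a finite poset `P`, the endomorphism
`∇_P` of `⊕_{p} U(p)` sending `in_p(u)` to `∑_{q ≤ p} in_q(u|_q)` is an isomorphism. -/
theorem stmt5 {P : Type*} [Fintype P] [DecidableEq P] [PartialOrder P]
    [DecidableRel (α := P) (· ≤ ·)]
    (U : P → Type*) [∀ p, AddCommGroup (U p)]
    (res : ∀ p q : P, q ≤ p → (U p →+ U q))
    (hres_id : ∀ p, res p p le_rfl = AddMonoidHom.id (U p))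
    (hres_comp : ∀ (p q r : P) (hrq : r ≤ q) (hqp : q ≤ p),
      (res q r hrq).comp (res p q hqp) = res p r (hrq.trans hqp)) :
    Function.Bijective
      (DirectSum.toAddMonoid (fun p : P =>
        ∑ q : {q : P // q ≤ p}, (DirectSum.of U q.1).comp (res p q.1 q.2)) :
          DirectSum P U →+ DirectSum P U) := by
  letI : DecidableRel (α := P) (· < ·) :=
    fun a b => decidable_of_iff _ lt_iff_le_not_ge.symm
  constructor
  · intro x y hxy
    have H : ∀ p : P, x p = y p := by
      intro p
      refine WellFounded.induction (C := fun p => x p = y p)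
        (Finite.to_wellFoundedGT (α := P)).wf p ?_
      intro q IH
      have hq : (DirectSum.toAddMonoid (fun p : P =>
          ∑ q : {q : P // q ≤ p}, (DirectSum.of U q.1).comp (res p q.1 q.2)) :
            DirectSum P U →+ DirectSum P U) x q
          = (DirectSum.toAddMonoid (fun p : P =>
          ∑ q : {q : P // q ≤ p}, (DirectSum.of U q.1).comp (res p q.1 q.2)) :
            DirectSum P U →+ DirectSum P U) y q := by rw [hxy]
      rw [stmt5_key U res hres_id x q, stmt5_key U res hres_id y q] at hq
      have hs : (∑ r, if h : q < r then res r q h.le (x r) else 0)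
          = ∑ r, if h : q < r then res r q h.le (y r) else 0 := by
        refine Finset.sum_congr rfl (fun r _ => ?_)
        split
        · rename_i h; rw [IH r h]
        · rfl
      rw [hs] at hq
      exact add_right_cancel hq
    exact DFinsupp.ext H
  · intro y
    refine ⟨(DFinsupp.equivFunOnFintype (ι := P) (β := U)).symm
      (stmt5Inv U res (fun p => y p)), ?_⟩
    have hx : ∀ p : P, ((DFinsupp.equivFunOnFintype (ι := P) (β := U)).symm
        (stmt5Inv U res (fun p => y p)) : DirectSum P U) p
          = stmt5Inv U res (fun p => y p) p := by
      intro p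
      have h2 : DFinsupp.equivFunOnFintype (ι := P) (β := U)
          ((DFinsupp.equivFunOnFintype (ι := P) (β := U)).symm
            (stmt5Inv U res (fun p => y p)))
          = stmt5Inv U res (fun p => y p) :=
        (DFinsupp.equivFunOnFintype (ι := P) (β := U)).apply_symm_apply _
      exact congrFun h2 p
    apply DFinsupp.ext
    intro p
    rw [stmt5_key U res hres_id]
    have hs : (∑ q, if h : p < q then res q p h.le
          (((DFinsupp.equivFunOnFintype (ι := P) (β := U)).symm
            (stmt5Inv U res (fun p => y p)) : DirectSum P U) q) else 0)
        = ∑ q, if h : p < q then res q p h.le (stmt5Inv U res (fun p => y p) q) else 0 := by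
      refine Finset.sum_congr rfl (fun r _ => ?_)
      split
      · rw [hx r]
      · rfl
    rw [hx p, hs, stmt5Inv_eq]
    exact sub_add_cancel _ _
end

section
/- Let P be a finite poset with binary infimum operation ∧ and greatest element ⊤, and U : P^op → Ab a presheaf equipped with an extender λ, i.e. homomorphisms λ_p^q : U(q) → U(p) for p ≥ q such that λ_p^q(s)|_q = s for p ≥ q and λ_⊤^q(s)|_p = λ_p^{p∧q}(s|_{p∧q}) for all p, q. Put P^× = P \ {⊤}. Then the homomorphism U(⊤) → lim_{p ∈ P^×} U(p), u ↦ (u|_p)_{p ∈ P^×}, is surjective. -/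
/-- Lemma 9.2: for a presheaf of abelian groups on a finite lattice `P` (with top `⊤`
and infima) equipped with an extender `λ`, the restriction homomorphism
`U(⊤) → lim_{p ≠ ⊤} U(p)` is surjective: every compatible family over `P \ {⊤}`
extends to a section over `⊤`. -/
theorem stmt6 {P : Type*} [Fintype P] [SemilatticeInf P] [OrderTop P]
    (U : P → Type*) [∀ p, AddCommGroup (U p)]
    (res : ∀ p q : P, q ≤ p → (U p →+ U q))
    (hres_id : ∀ p, res p p le_rfl = AddMonoidHom.id (U p))
    (hres_comp : ∀ (p q r : P) (hrq : r ≤ q) (hqp : q ≤ p),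
      (res q r hrq).comp (res p q hqp) = res p r (hrq.trans hqp))
    (lam : ∀ p q : P, q ≤ p → (U q →+ U p))
    (hlam1 : ∀ (p q : P) (h : q ≤ p) (s : U q), res p q h (lam p q h s) = s)
    (hlam2 : ∀ (p q : P) (s : U q), res ⊤ p le_top (lam ⊤ q le_top s)
        = lam p (p ⊓ q) inf_le_left (res q (p ⊓ q) inf_le_right s))
    (u : ∀ p : P, p ≠ ⊤ → U p)
    (hu : ∀ (p q : P) (hp : p ≠ ⊤) (hq : q ≠ ⊤) (h : q ≤ p),
      res p q h (u p hp) = u q hq) :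
    ∃ v : U ⊤, ∀ (p : P) (hp : p ≠ ⊤), res ⊤ p le_top v = u p hp := by
  classical
  classical
  -- `lam q q` is the identity
  have hlam_id : ∀ (q : P) (h : q ≤ q) (s : U q), lam q q h s = s := by
    intro q h s
    have h1 := hlam1 q q h s
    rwa [hres_id q, AddMonoidHom.id_apply] at h1
  -- total family, with junk value at ⊤
  let w : ∀ q : P, U q := fun q => if h : q = ⊤ then 0 else u q h
  have hw : ∀ (a b : P) (h : b ≤ a), a ≠ ⊤ → res a b h (w a) = w b := by
    intro a b h ha
    have hb : b ≠ ⊤ := fun hb => ha (top_le_iff.mp (hb ▸ h))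
    show res a b h (dite _ _ _) = dite _ _ _
    rw [dif_neg ha, dif_neg hb]
    exact hu a b ha hb h
  let α := {x : P // x ≠ ⊤}
  haveI : Fintype α := Fintype.ofFinite α
  let m : Finset α → P := fun S => S.inf Subtype.val
  have hm : ∀ S : Finset α, S.Nonempty → m S ≠ ⊤ := by
    rintro S ⟨x, hx⟩ htop
    have hle : m S ≤ x.1 := Finset.inf_le hx
    rw [htop] at hle
    exact x.2 (top_le_iff.mp hle)
  refine ⟨∑ S ∈ Finset.univ.filter Finset.Nonempty,
      (-1 : ℤ) ^ (S.card + 1) • lam ⊤ (m S) le_top (w (m S)), ?_⟩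
  intro p hp
  rw [map_sum]
  set a : α := ⟨p, hp⟩ with ha
  -- the restricted terms, expressed through a non-dependent function of `p ⊓ m S`
  let F : P → U p := fun r => if h : r ≤ p then lam p r h (w r) else 0
  have hF : ∀ q : P, F (p ⊓ q) = lam p (p ⊓ q) inf_le_left (w (p ⊓ q)) := by
    intro q
    show dite _ _ _ = _
    rw [dif_pos inf_le_left]
  have hterm : ∀ S ∈ Finset.univ.filter Finset.Nonempty,
      res ⊤ p le_top ((-1 : ℤ) ^ (S.card + 1) • lam ⊤ (m S) le_top (w (m S)))
      = (-1 : ℤ) ^ (S.card + 1) • F (p ⊓ m S) := by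
    intro S hS
    simp only [Finset.mem_filter] at hS
    rw [map_zsmul, hlam2, hw _ _ _ (hm S hS.2), hF]
  rw [Finset.sum_congr rfl hterm]
  have hwp : w p = u p hp := dif_neg hp
  rw [← hwp]
  -- split off the singleton `{a}` and cancel the rest by the involution `S ↦ S Δ {a}`
  have hmem : {a} ∈ Finset.univ.filter Finset.Nonempty := by
    simp [Finset.singleton_nonempty]
  rw [← Finset.add_sum_erase _ _ hmem]
  have hsingle : (-1 : ℤ) ^ (({a} : Finset α).card + 1) • F (p ⊓ m {a}) = w p := by
    have h1 : m {a} = p := Finset.inf_singleton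
    have h2 : p ⊓ p = p := inf_idem p
    rw [h1, h2, Finset.card_singleton]
    have h3 : ((-1 : ℤ)) ^ (1 + 1) = 1 := by norm_num
    rw [h3, one_smul]
    show dite _ _ _ = _
    rw [dif_pos le_rfl]
    exact hlam_id p le_rfl (w p)
  rw [hsingle]
  have hminf_ins : ∀ S : Finset α, p ⊓ m (insert a S) = p ⊓ m S := by
    intro S
    show p ⊓ (insert a S).inf Subtype.val = p ⊓ S.inf Subtype.val
    rw [Finset.inf_insert, ← inf_assoc, inf_idem]
  have hcancel : ∑ S ∈ (Finset.univ.filter Finset.Nonempty).erase {a},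
      (-1 : ℤ) ^ (S.card + 1) • F (p ⊓ m S) = 0 := by
    apply Finset.sum_involution (g := fun S _ => if a ∈ S then S.erase a else insert a S)
    · -- f S + f (g S) = 0
      intro S hS
      by_cases haS : a ∈ S
      · simp only [if_pos haS]
        have hins : insert a (S.erase a) = S := Finset.insert_erase haS
        have hcard : S.card = (S.erase a).card + 1 := by
          rw [← hins, Finset.card_insert_of_notMem (Finset.notMem_erase a S),
            Finset.erase_insert (Finset.notMem_erase a S)]
        have hminf : p ⊓ m S = p ⊓ m (S.erase a) := by
          conv_lhs => rw [← hins]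
          exact hminf_ins _
        rw [hcard, hminf]
        have hs : ((-1 : ℤ)) ^ ((S.erase a).card + 1 + 1)
            = -((-1 : ℤ)) ^ ((S.erase a).card + 1) := by ring
        rw [hs, neg_smul, neg_add_cancel]
      · simp only [if_neg haS]
        have hcard : (insert a S).card = S.card + 1 :=
          Finset.card_insert_of_notMem haS
        rw [hcard, hminf_ins S]
        have hs : ((-1 : ℤ)) ^ (S.card + 1 + 1)
            = -((-1 : ℤ)) ^ (S.card + 1) := by ring
        rw [hs, neg_smul, add_neg_cancel]
    · -- g S ≠ S
      intro S hS _
      by_cases haS : a ∈ S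
      · simp only [if_pos haS]
        intro h
        have := Finset.notMem_erase a S
        rw [h] at this
        exact this haS
      · simp only [if_neg haS]
        intro h
        have := Finset.mem_insert_self a S
        rw [h] at this
        exact haS this
    · -- g (g S) = S
      intro S hS
      by_cases haS : a ∈ S
      · simp only [if_pos haS, if_neg (Finset.notMem_erase a S)]
        exact Finset.insert_erase haS
      · simp only [if_neg haS, if_pos (Finset.mem_insert_self a S)]
        exact Finset.erase_insert haS
    · -- g S ∈ s
      intro S hS
      simp only [Finset.mem_erase, Finset.mem_filter, Finset.mem_univ, true_and] at hS
      by_cases haS : a ∈ S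
      · simp only [if_pos haS]
        refine Finset.mem_erase.mpr ⟨?_, Finset.mem_filter.mpr ⟨Finset.mem_univ _, ?_⟩⟩
        · intro h
          have := Finset.notMem_erase a S
          rw [h] at this
          exact this (Finset.mem_singleton_self a)
        · obtain ⟨b, hbS, hba⟩ : ∃ b ∈ S, b ≠ a := by
            by_contra hcon
            push_neg at hcon
            exact hS.1 (Finset.eq_singleton_iff_unique_mem.mpr ⟨haS, hcon⟩)
          exact ⟨b, Finset.mem_erase.mpr ⟨hba, hbS⟩⟩
      · simp only [if_neg haS]
        refine Finset.mem_erase.mpr ⟨?_, Finset.mem_filter.mpr ⟨Finset.mem_univ _,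
          Finset.insert_nonempty a S⟩⟩
        intro h
        obtain ⟨b, hbS⟩ := hS.2
        have hsub : S ⊆ {a} := h ▸ Finset.subset_insert a S
        have hb : b = a := Finset.mem_singleton.mp (hsub hbS)
        exact haS (hb ▸ hbS)
  rw [hcancel, add_zero]
end

section
/- Let I be a finite set of cardinality s, let the monoid 𝒫(I) (under intersection) act on a set Y, and suppose the action is special: Y = ⋃_{i∈I} Fix({i}), i.e. every y ∈ Y is fixed by the action of some singleton {i}. Let T be a set, u : T → Y a function, and R ⊆ T a subset with |R| < s. Let J ⊆ I with |J| ≥ s. Then in the free abelian group ℤ[Y^R] on functions R → Y, the element ∑_{K ⊆ J} (-1)^{|J|-|K|} ⟨K_{(Y)} ∘ u|_R⟩ is zero, where K_{(Y)} denotes the action of K on Y. -/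
/-- Key computation in Lemma 20.3: for a special action of the monoid `𝒫(I)`
(under intersection) on `Y`, a function `u : T → Y`, a subset `R ⊆ T` with
`|R| < |I|`, and `J ⊆ I` with `|J| ≥ |I|`, the alternating sum
`∑_{K ⊆ J} (-1)^{|J|-|K|} ⟨K_{(Y)} ∘ u|_R⟩` vanishes in `ℤ[Y^R]`. -/
theorem stmt14 {I Y T : Type*} [Fintype I] [DecidableEq I]
    (act : Finset I → Y → Y)
    (h_one : ∀ y : Y, act Finset.univ y = y)
    (h_mul : ∀ (J K : Finset I) (y : Y), act (J ∩ K) y = act J (act K y))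
    (h_special : ∀ y : Y, ∃ i : I, act {i} y = y)
    (u : T → Y) (R : Finset T) (hR : R.card < Fintype.card I)
    (J : Finset I) (hJ : Fintype.card I ≤ J.card) :
    ∑ K ∈ J.powerset, (-1 : ℤ) ^ (J.card - K.card) •
        FreeAbelianGroup.of (fun t : {x // x ∈ R} => act K (u t.1)) = 0 := by
  classical
  have hJu : J = Finset.univ :=
    Finset.eq_univ_of_card J (le_antisymm (Finset.card_le_univ J) hJ)
  set ι : Y → I := fun y => Classical.choose (h_special y) with hιdef
  have hι : ∀ y, act {ι y} y = y := fun y => Classical.choose_spec (h_special y)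
  obtain ⟨j, hj⟩ : ∃ j : I, ∀ t ∈ R, ι (u t) ≠ j := by
    have hcard : (R.image fun t => ι (u t)).card < Fintype.card I :=
      lt_of_le_of_lt Finset.card_image_le hR
    obtain ⟨j, hj⟩ : ∃ j : I, j ∉ R.image fun t => ι (u t) := by
      by_contra h
      push_neg at h
      have : (R.image fun t => ι (u t)) = Finset.univ := Finset.eq_univ_of_forall h
      rw [this, Finset.card_univ] at hcard
      exact lt_irrefl _ hcard
    exact ⟨j, fun t ht h => hj (h ▸ Finset.mem_image_of_mem _ ht)⟩
  -- the key fact: act K (u t) only depends on K ∩ {ι (u t)}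
  have key : ∀ (K K' : Finset I) (t : T), K ∩ {ι (u t)} = K' ∩ {ι (u t)} →
      act K (u t) = act K' (u t) := by
    intro K K' t h
    calc act K (u t) = act (K ∩ {ι (u t)}) (u t) := by rw [h_mul, hι]
      _ = act (K' ∩ {ι (u t)}) (u t) := by rw [h]
      _ = act K' (u t) := by rw [h_mul, hι]
  refine Finset.sum_involution
    (fun K _ => if j ∈ K then K.erase j else insert j K) ?_ ?_ ?_ ?_
  · intro K hK
    have hKJ : K ⊆ J := Finset.mem_powerset.mp hK
    set K' : Finset I := if j ∈ K then K.erase j else insert j K with hK'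
    have hsame : (FreeAbelianGroup.of (fun t : {x // x ∈ R} => act K (u t.1)))
        = FreeAbelianGroup.of (fun t : {x // x ∈ R} => act K' (u t.1)) := by
      congr 1
      funext t
      refine key K K' t.1 ?_
      have hne : ι (u t.1) ≠ j := hj t.1 t.2
      ext a
      simp only [Finset.mem_inter, Finset.mem_singleton, hK']
      constructor
      · rintro ⟨ha, rfl⟩
        refine ⟨?_, rfl⟩
        split
        · exact Finset.mem_erase.mpr ⟨hne, ha⟩
        · exact Finset.mem_insert_of_mem ha
      · rintro ⟨ha, rfl⟩
        refine ⟨?_, rfl⟩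
        split at ha
        · exact Finset.mem_of_mem_erase ha
        · rcases Finset.mem_insert.mp ha with h | h
          · exact absurd h hne
          · exact h
    rw [hsame]
    rw [← add_smul]
    convert zero_smul ℤ _
    by_cases hjK : j ∈ K
    · have hc : K'.card + 1 = K.card := by
        simp only [hK', if_pos hjK]
        exact Finset.card_erase_add_one hjK
      have h1 : 1 ≤ K.card := Nat.one_le_iff_ne_zero.mpr (by
        intro h; rw [Finset.card_eq_zero] at h; simp [h] at hjK)
      have h2 : K.card ≤ J.card := Finset.card_le_card hKJ
      have : J.card - K'.card = (J.card - K.card) + 1 := by omega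
      rw [this, pow_succ]
      ring
    · have hc : K'.card = K.card + 1 := by
        simp only [hK', if_neg hjK]
        exact Finset.card_insert_of_notMem hjK
      have h2 : K'.card ≤ J.card := by
        apply Finset.card_le_card
        rw [hJu]; exact Finset.subset_univ _
      have : J.card - K.card = (J.card - K'.card) + 1 := by omega
      rw [this, pow_succ]
      ring
  · intro K hK _
    show (if j ∈ K then K.erase j else insert j K) ≠ K
    by_cases hjK : j ∈ K
    · rw [if_pos hjK]
      intro h
      have := Finset.notMem_erase j K
      rw [h] at this
      exact this hjK
    · rw [if_neg hjK]
      intro h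
      have := Finset.mem_insert_self j K
      rw [h] at this
      exact hjK this
  · intro K hK
    show (if j ∈ K then K.erase j else insert j K) ∈ J.powerset
    rw [Finset.mem_powerset, hJu]
    exact Finset.subset_univ _
  · intro K hK
    show (if j ∈ (if j ∈ K then K.erase j else insert j K)
        then (if j ∈ K then K.erase j else insert j K).erase j
        else insert j (if j ∈ K then K.erase j else insert j K)) = K
    by_cases hjK : j ∈ K
    · simp only [if_pos hjK, Finset.notMem_erase, if_false, Finset.insert_erase hjK]
    · simp only [if_neg hjK, Finset.mem_insert_self, if_true, Finset.erase_insert hjK]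
end
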